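/- For every dimension d ≥ 1 there exists a constant c > 0 such that for all integers 1 ≤ n ≤ N there exist finite sets S_R, S_B ⊂ ℝ^d with |S_R| = n and |S_B| = N such that the number of distinct values Mar(V), taken over all subsets V ⊆ S_R ∪ S_B that contain at least one red and at least one blue point and are strongly separable, is at least c · n · N^d. -/

import Mathlib

open scoped RealInnerProductSpace

/-- The hyperplane `{x : ⟪w, x⟫ = c}`. -/
def hplane (d : ℕ) (w : EuclideanSpace ℝ (Fin d)) (c : ℝ) :
    Set (EuclideanSpace ℝ (Fin d)) :=
  {x | ⟪w, x⟫ = c}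

/-- The margin `M_h(T) = min_{a ∈ T} dist(a, h)` of a hyperplane `h` w.r.t. a set `T`. -/
noncomputable def margin (d : ℕ) (T h : Set (EuclideanSpace ℝ (Fin d))) : ℝ :=
  sInf ((fun a => Metric.infDist a h) '' T)

/-- `(w, c)` strictly separates the red set `VR` from the blue set `VB`. -/
def StrictSep (d : ℕ) (VR VB : Set (EuclideanSpace ℝ (Fin d)))
    (w : EuclideanSpace ℝ (Fin d)) (c : ℝ) : Prop :=
  (∀ r ∈ VR, ⟪w, r⟫ < c) ∧ ∀ b ∈ VB, c < ⟪w, b⟫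

/-- `m` is the separation-margin `Mar(V)` of the bichromatic dataset `(VR, VB)`:
the margin of its maximum-margin separator. -/
def IsMar (d : ℕ) (VR VB : Finset (EuclideanSpace ℝ (Fin d))) (m : ℝ) : Prop :=
  ∃ (w : EuclideanSpace ℝ (Fin d)) (c : ℝ), w ≠ 0 ∧ StrictSep d ↑VR ↑VB w c ∧
    (∀ (w' : EuclideanSpace ℝ (Fin d)) (c' : ℝ), w' ≠ 0 → StrictSep d ↑VR ↑VB w' c' →
      margin d (↑VR ∪ ↑VB) (hplane d w' c') ≤ margin d (↑VR ∪ ↑VB) (hplane d w c)) ∧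
    m = margin d (↑VR ∪ ↑VB) (hplane d w c)

/-!
Take `K = min d N` coordinate axes `e_k` and `M = N / K`. For a code `τ : Fin K → Fin M`, the
blue points `ν_k⁻¹ e_k` with `ν_k² = 1 + τ_k M^k / M^K` span a simplex in the hyperplane
`⟪∑ ν_k e_k, x⟫ = 1`, and `∑ ν_k² = K + (τ read in base M) / M^K` separates the `M^K` codes by
gaps of `M^(-K)`. A red point `-δ_i e_0` with a tiny offset `δ_i` has the foot of its
perpendicular inside that simplex, so the perpendicular bisector is the maximum-margin separator
and `Mar = (1 + δ_i ν_0) / (2 √(∑ ν_k²))`. The offsets are too small to bridge the gaps, so the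
`n M^K ≥ n N^d / (2d)^d` pairs `(i, τ)` give distinct margins.
-/

section Margin

variable {d : ℕ}

local notation "E" => EuclideanSpace ℝ (Fin d)

lemma infDist_hplane {w : E} (hw : w ≠ 0) (c : ℝ) (a : E) :
    Metric.infDist a (hplane d w c) = |⟪w, a⟫ - c| / ‖w‖ := by
  have hw' : 0 < ‖w‖ := norm_pos_iff.2 hw
  set foot := a - ((⟪w, a⟫ - c) / ‖w‖ ^ 2) • w
  have hfoot : foot ∈ hplane d w c := by
    simp only [foot, hplane, Set.mem_ofPred_eq, inner_sub_right, real_inner_smul_right,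
      real_inner_self_eq_norm_sq]
    field_simp
    ring
  refine le_antisymm ?_ ((Metric.le_infDist ⟨foot, hfoot⟩).2 fun y (hy : ⟪w, y⟫ = c) => ?_)
  · calc Metric.infDist a (hplane d w c) ≤ dist a foot := Metric.infDist_le_dist_of_mem hfoot
      _ = |⟪w, a⟫ - c| / ‖w‖ := by
        rw [dist_eq_norm, sub_sub_cancel, norm_smul, Real.norm_eq_abs, abs_div,
          abs_of_pos (pow_pos hw' 2)]
        field_simp
  · rw [div_le_iff₀ hw', ← hy, ← inner_sub_right, dist_eq_norm, mul_comm]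
    exact abs_real_inner_le_norm w (a - y)

lemma margin_le_infDist {T h : Set E} {a : E} (ha : a ∈ T) :
    margin d T h ≤ Metric.infDist a h :=
  csInf_le ⟨0, by rintro _ ⟨x, -, rfl⟩; exact Metric.infDist_nonneg⟩ ⟨a, ha, rfl⟩

lemma le_margin {T h : Set E} {m : ℝ} (hT : T.Nonempty)
    (hm : ∀ a ∈ T, m ≤ Metric.infDist a h) : m ≤ margin d T h :=
  le_csInf (hT.image _) (by rintro _ ⟨a, ha, rfl⟩; exact hm a ha)

lemma IsMar.unique {VR VB : Finset E} {m m' : ℝ} (h : IsMar d VR VB m)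
    (h' : IsMar d VR VB m') : m = m' := by
  obtain ⟨w, c, hw, hs, hopt, rfl⟩ := h
  obtain ⟨w', c', hw', hs', hopt', rfl⟩ := h'
  exact le_antisymm (hopt' w c hw hs) (hopt w' c' hw' hs')

lemma setOf_isMar_finite (SR SB : Finset E) :
    {m : ℝ | ∃ VR ⊆ SR, ∃ VB ⊆ SB, VR.Nonempty ∧ VB.Nonempty ∧ IsMar d VR VB m}.Finite := by
  refine ((SR.powerset ×ˢ SB.powerset).finite_toSet.biUnion fun P _ =>
    Set.Subsingleton.finite (s := {m | IsMar d P.1 P.2 m}) fun _ h _ h' => h.unique h').subset ?_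
  rintro m ⟨VR, hVR, VB, hVB, -, -, hm⟩
  exact Set.mem_biUnion (x := (VR, VB)) (by simp [hVR, hVB]) hm

/-- The points on the blue side at distance at least the margin form a convex half-space, so it
contains `p`; together with the red point this gives `2 · margin ≤ ‖p - r‖`. -/
lemma margin_le_half_dist_of_mem_convexHull {T B : Set E} {r p w : E} {c : ℝ} (hw : w ≠ 0)
    (hrT : r ∈ T) (hBT : B ⊆ T) (hr : ⟪w, r⟫ < c) (hB : ∀ b ∈ B, c < ⟪w, b⟫)
    (hp : p ∈ convexHull ℝ B) :
    margin d T (hplane d w c) ≤ ‖p - r‖ / 2 := by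
  set m := margin d T (hplane d w c)
  have hw' : 0 < ‖w‖ := norm_pos_iff.2 hw
  have hm_le : ∀ a ∈ T, m * ‖w‖ ≤ |⟪w, a⟫ - c| := fun a ha => by
    rw [← le_div_iff₀ hw', ← infDist_hplane hw]
    exact margin_le_infDist ha
  have hred : m * ‖w‖ ≤ c - ⟪w, r⟫ := by
    simpa [abs_of_neg (sub_neg.2 hr)] using hm_le r hrT
  have hblue : p ∈ {x : E | c + m * ‖w‖ ≤ ⟪w, x⟫} := by
    refine convexHull_min (fun b hb => ?_) (convex_halfSpace_ge ?_ _) hp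
    · have := hm_le b (hBT hb)
      rw [abs_of_pos (sub_pos.2 (hB b hb))] at this
      simp only [Set.mem_ofPred_eq]
      linarith
    · exact (innerₛₗ ℝ w).isLinear
  have hCS : ⟪w, p - r⟫ ≤ ‖w‖ * ‖p - r‖ := real_inner_le_norm w (p - r)
  rw [inner_sub_right] at hCS
  simp only [Set.mem_ofPred_eq] at hblue
  nlinarith

lemma isMar_singleton_of_orthogonal_projection {r p : E} {VB : Finset E}
    (hp : p ∈ convexHull ℝ (VB : Set E)) (hpr : p ≠ r)
    (horth : ∀ b ∈ VB, ⟪p - r, b - p⟫ = 0) :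
    IsMar d {r} VB (‖p - r‖ / 2) := by
  set w := p - r
  have hw : w ≠ 0 := sub_ne_zero.2 hpr
  have hw' : 0 < ‖w‖ := norm_pos_iff.2 hw
  set c := ⟪w, r⟫ + ‖w‖ ^ 2 / 2 with hc
  have hwp : ⟪w, p⟫ = ⟪w, r⟫ + ‖w‖ ^ 2 := by
    rw [← real_inner_self_eq_norm_sq, inner_sub_right]; ring
  have hwb : ∀ b ∈ VB, ⟪w, b⟫ = c + ‖w‖ ^ 2 / 2 := fun b hb => by
    have := horth b hb
    rw [inner_sub_right] at this
    linarith
  have hsep : StrictSep d ↑({r} : Finset E) ↑VB w c := by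
    refine ⟨fun x hx => ?_, fun b hb => ?_⟩
    · rw [Finset.coe_singleton, Set.mem_singleton_iff] at hx
      rw [hx]
      linarith [pow_pos hw' 2]
    · rw [hwb b hb]
      linarith [pow_pos hw' 2]
  have hdist : ∀ a ∈ (↑({r} : Finset E) ∪ ↑VB : Set E),
      Metric.infDist a (hplane d w c) = ‖w‖ / 2 := by
    rintro a (ha | ha)
    · rw [Finset.coe_singleton, Set.mem_singleton_iff] at ha
      rw [infDist_hplane hw, ha, show ⟪w, r⟫ - c = -(‖w‖ ^ 2 / 2) by ring, abs_neg,
        abs_of_pos (by positivity)]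
      field_simp
    · rw [infDist_hplane hw, hwb a ha, add_sub_cancel_left, abs_of_pos (by positivity)]
      field_simp
  have hrV : r ∈ (↑({r} : Finset E) ∪ ↑VB : Set E) :=
    Or.inl (Finset.mem_coe.2 (Finset.mem_singleton_self r))
  have hmargin : margin d (↑({r} : Finset E) ∪ ↑VB) (hplane d w c) = ‖w‖ / 2 :=
    le_antisymm ((margin_le_infDist hrV).trans_eq (hdist r hrV))
      (le_margin ⟨r, hrV⟩ fun a ha => (hdist a ha).ge)
  refine ⟨w, c, hw, hsep, fun w' c' hw' hsep' => ?_, hmargin.symm⟩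
  rw [hmargin]
  exact margin_le_half_dist_of_mem_convexHull hw' hrV Set.subset_union_right
    (hsep'.1 r (Finset.mem_coe.2 (Finset.mem_singleton_self r))) hsep'.2 hp

end Margin

section Simplex

variable {ι : Type*} [Fintype ι] {ν : ι → ℝ} {δ : ℝ}

lemma neg_smul_add_smul_sum_mem_convexHull {V : Type*} [AddCommGroup V] [Module ℝ V]
    (e : ι → V) (hν : ∀ k, 0 < ν k) (k₀ : ι) (hδ : 0 ≤ δ)
    (hsmall : δ * ν k₀ * ∑ k, ν k ^ 2 ≤ (1 + δ * ν k₀) * ν k₀ ^ 2) :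
    -δ • e k₀ + ((1 + δ * ν k₀) / ∑ k, ν k ^ 2) • ∑ k, ν k • e k ∈
      convexHull ℝ (Set.range fun k => (ν k)⁻¹ • e k) := by
  classical
  set S := ∑ k, ν k ^ 2
  set ℓ := δ * ν k₀
  set μ := (1 + ℓ) / S
  have hS : 0 < S :=
    Finset.sum_pos' (fun k _ => sq_nonneg (ν k)) ⟨k₀, Finset.mem_univ _, pow_pos (hν k₀) 2⟩
  have hℓ : 0 ≤ ℓ := mul_nonneg hδ (hν k₀).le
  have hμS : μ * S = 1 + ℓ := div_mul_cancel₀ _ hS.ne'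
  set a : ι → ℝ := fun k => μ * ν k ^ 2 - if k = k₀ then ℓ else 0
  have ha_nonneg : ∀ k, 0 ≤ a k := fun k => by
    simp only [a]
    split_ifs with hk
    · rw [hk, sub_nonneg, div_mul_eq_mul_div, le_div_iff₀ hS]
      linarith
    · rw [sub_zero]
      positivity
  have ha_sum : ∑ k, a k = 1 := by
    simp only [a, Finset.sum_sub_distrib, ← Finset.mul_sum, Finset.sum_ite_eq',
      Finset.mem_univ, if_true]
    change μ * S - ℓ = 1
    rw [hμS]
    ring
  have ha_comb : ∑ k, a k • (ν k)⁻¹ • e k = -δ • e k₀ + μ • ∑ k, ν k • e k := by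
    have : ∀ k, a k • (ν k)⁻¹ • e k = μ • ν k • e k - if k = k₀ then δ • e k₀ else 0 := by
      intro k
      simp only [a]
      split_ifs with hk
      · subst hk
        rw [smul_smul, smul_smul, ← sub_smul]
        congr 1
        field_simp [(hν k).ne']
        ring
      · rw [sub_zero, sub_zero, smul_smul, smul_smul]
        congr 1
        field_simp [(hν k).ne']
    simp only [this, Finset.sum_sub_distrib, ← Finset.smul_sum, Finset.sum_ite_eq',
      Finset.mem_univ, if_true]
    rw [neg_smul]
    abel
  rw [← ha_comb]
  exact (convex_convexHull ℝ _).sum_mem (fun k _ => ha_nonneg k) ha_sum fun k _ =>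
    subset_convexHull ℝ _ (Set.mem_range_self k)

variable {d : ℕ}

/-- The blue points `ν_k⁻¹ e_k` span a simplex in the hyperplane `⟪∑ ν_k e_k, x⟫ = 1`; `hsmall`
keeps the foot of the perpendicular from `-δ e_{k₀}` to it inside the simplex. -/
lemma isMar_neg_smul_of_orthonormal {e : ι → EuclideanSpace ℝ (Fin d)} (he : Orthonormal ℝ e)
    (hν : ∀ k, 0 < ν k) (k₀ : ι) (hδ : 0 ≤ δ)
    (hsmall : δ * ν k₀ * ∑ k, ν k ^ 2 ≤ (1 + δ * ν k₀) * ν k₀ ^ 2) :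
    IsMar d {-δ • e k₀} (Finset.univ.image fun k => (ν k)⁻¹ • e k)
      ((1 + δ * ν k₀) / √(∑ k, ν k ^ 2) / 2) := by
  set S := ∑ k, ν k ^ 2
  set ℓ := δ * ν k₀
  set μ := (1 + ℓ) / S
  have hS : 0 < S :=
    Finset.sum_pos' (fun k _ => sq_nonneg (ν k)) ⟨k₀, Finset.mem_univ _, pow_pos (hν k₀) 2⟩
  have hℓ : 0 ≤ ℓ := mul_nonneg hδ (hν k₀).le
  have hμS : μ * S = 1 + ℓ := div_mul_cancel₀ _ hS.ne'
  set n := ∑ k, ν k • e k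
  set r := -δ • e k₀
  set p := r + μ • n
  have hn_e : ∀ k, ⟪n, e k⟫ = ν k := fun k => he.inner_left_fintype ν k
  have hn_n : ⟪n, n⟫ = S := by
    simp only [n, he.inner_sum, conj_trivial, sq, S]
  have hn_p : ⟪n, p⟫ = 1 := by
    rw [inner_add_right, real_inner_smul_right, hn_e, real_inner_smul_right, hn_n, hμS]
    ring
  have hpr : p - r = μ • n := add_sub_cancel_left r _
  have hdist : ‖p - r‖ = (1 + ℓ) / √S := by
    rw [hpr, norm_smul, Real.norm_of_nonneg (by positivity), ← Real.sqrt_sq (norm_nonneg n),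
      ← real_inner_self_eq_norm_sq, hn_n]
    field_simp
    rw [Real.sq_sqrt hS.le, hμS]
  have hp : p ∈ convexHull ℝ ↑(Finset.univ.image fun k => (ν k)⁻¹ • e k) := by
    rw [Finset.coe_image, Finset.coe_univ, Set.image_univ]
    exact neg_smul_add_smul_sum_mem_convexHull e hν k₀ hδ hsmall
  have horth : ∀ b ∈ Finset.univ.image fun k => (ν k)⁻¹ • e k, ⟪p - r, b - p⟫ = 0 := by
    simp only [Finset.mem_image, Finset.mem_univ, true_and, forall_exists_index,
      forall_apply_eq_imp_iff]
    intro k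
    rw [hpr, real_inner_smul_left, inner_sub_right, real_inner_smul_right, hn_e, hn_p,
      inv_mul_cancel₀ (hν k).ne', sub_self, mul_zero]
  have hpr_ne : p ≠ r := sub_ne_zero.1 <| norm_pos_iff.1 <| by
    rw [hdist]
    exact div_pos (by positivity) (Real.sqrt_pos.2 hS)
  rw [← hdist]
  exact isMar_singleton_of_orthogonal_projection hp hpr_ne horth

end Simplex

lemma div_sqrt_lt_div_sqrt {ℓ ℓ' S S' : ℝ} (hℓ : 0 ≤ ℓ) (hℓ' : 0 ≤ ℓ') (hS : 0 < S)
    (hgap : S + (2 * ℓ' + ℓ' ^ 2) * S < S') :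
    (1 + ℓ') / √S' < (1 + ℓ) / √S := by
  have hS' : 0 < S' := by nlinarith
  rw [div_lt_div_iff₀ (Real.sqrt_pos.2 hS') (Real.sqrt_pos.2 hS)]
  refine lt_of_pow_lt_pow_left₀ 2 (by positivity) ?_
  rw [mul_pow, mul_pow, Real.sq_sqrt hS.le, Real.sq_sqrt hS'.le]
  have : 0 ≤ (2 * ℓ + ℓ ^ 2) * S' := by positivity
  linarith


lemma pow_le_two_mul_pow_mul_div_min_pow {d N : ℕ} (hd : 1 ≤ d) (hN : 1 ≤ N) :
    N ^ d ≤ (2 * d) ^ d * (N / min d N) ^ min d N := by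
  rcases le_or_gt d N with hdN | hNd
  · rw [min_eq_left hdN, ← mul_pow]
    gcongr
    have hq : 1 ≤ N / d := (Nat.one_le_div_iff hd).2 hdN
    have := Nat.lt_mul_div_succ N (Nat.zero_lt_of_lt hd)
    nlinarith
  · rw [min_eq_right hNd.le, Nat.div_self hN, one_pow, mul_one]
    gcongr
    omega

namespace MarginGrid

variable {d K M n : ℕ}

noncomputable def gridSq (K M : ℕ) (k : Fin K) (t : Fin M) : ℝ :=
  1 + (t : ℕ) * (M : ℝ) ^ (k : ℕ) / (M : ℝ) ^ K

noncomputable def sumSq (K M : ℕ) (τ : Fin K → Fin M) : ℝ :=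
  ∑ k, gridSq K M k (τ k)

-- The factor `6 (K + 1)` makes `δ_i ν_0 ∑ ν_k² < M^(-K) / 3`, well below the gap between codes.
noncomputable def shift (K M n : ℕ) (i : Fin n) : ℝ :=
  ((i : ℕ) + 1) / (6 * (K + 1) * (M : ℝ) ^ K * n)

noncomputable def marginValue (K M n : ℕ) [NeZero K] (i : Fin n) (τ : Fin K → Fin M) : ℝ :=
  (1 + shift K M n i * √(gridSq K M 0 (τ 0))) / √(sumSq K M τ)

lemma one_le_gridSq (k : Fin K) (t : Fin M) : 1 ≤ gridSq K M k t :=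
  le_add_of_nonneg_right (by positivity)

lemma gridSq_lt_two (k : Fin K) (t : Fin M) : gridSq K M k t < 2 := by
  have hM : (0 : ℝ) < M := Nat.cast_pos.2 (t.pos)
  have : (t : ℕ) * (M : ℝ) ^ (k : ℕ) < (M : ℝ) ^ K := by
    calc (t : ℕ) * (M : ℝ) ^ (k : ℕ) < M * (M : ℝ) ^ (k : ℕ) := by
          gcongr; exact_mod_cast t.isLt
      _ = (M : ℝ) ^ ((k : ℕ) + 1) := by ring
      _ ≤ (M : ℝ) ^ K := pow_le_pow_right₀ (by exact_mod_cast t.pos) k.isLt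
  rw [gridSq, ← lt_sub_iff_add_lt', div_lt_iff₀ (by positivity)]
  linarith

lemma sumSq_eq (τ : Fin K → Fin M) :
    sumSq K M τ = K + (finFunctionFinEquiv τ : ℕ) / (M : ℝ) ^ K := by
  simp only [sumSq, gridSq, finFunctionFinEquiv_apply, Finset.sum_add_distrib, Nat.cast_sum,
    Nat.cast_mul, Nat.cast_pow, Finset.sum_div, Finset.sum_const, Finset.card_univ,
    Fintype.card_fin, nsmul_eq_mul, mul_one]

lemma sumSq_lt (τ : Fin K → Fin M) : sumSq K M τ < K + 1 := by
  have hu := (finFunctionFinEquiv τ).isLt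
  have hM : (0 : ℝ) < (M : ℝ) ^ K := by
    exact_mod_cast Nat.pos_of_ne_zero (fun h => by simp [h] at hu)
  rw [sumSq_eq, add_lt_add_iff_left, div_lt_one hM]
  exact_mod_cast hu

lemma shift_pos (i : Fin n) (t : Fin M) : 0 < shift K M n i := by
  have : (0 : ℝ) < M := Nat.cast_pos.2 t.pos
  have : (0 : ℝ) < n := Nat.cast_pos.2 i.pos
  unfold shift
  positivity

lemma shift_mul_sqrt_gridSq_le (i : Fin n) (k : Fin K) (t : Fin M) :
    shift K M n i * √(gridSq K M k t) ≤ 1 / (3 * (K + 1) * (M : ℝ) ^ K) := by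
  have hM : (0 : ℝ) < M := Nat.cast_pos.2 t.pos
  have hn : (0 : ℝ) < n := Nat.cast_pos.2 i.pos
  have hi : ((i : ℕ) : ℝ) + 1 ≤ n := by exact_mod_cast i.isLt
  have hshift : shift K M n i ≤ 1 / (6 * (K + 1) * (M : ℝ) ^ K) := by
    rw [shift, div_le_div_iff₀ (by positivity) (by positivity), one_mul, mul_comm]
    gcongr
  have hsqrt : √(gridSq K M k t) ≤ 2 :=
    Real.sqrt_le_iff.2 ⟨zero_le_two, by linarith [gridSq_lt_two k t]⟩
  calc shift K M n i * √(gridSq K M k t) ≤ 1 / (6 * (K + 1) * (M : ℝ) ^ K) * 2 :=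
        mul_le_mul hshift hsqrt (Real.sqrt_nonneg _) (by positivity)
    _ = 1 / (3 * (K + 1) * (M : ℝ) ^ K) := by field_simp; ring

lemma shift_injective (hM : 0 < M) : Function.Injective (shift K M n) := by
  intro i i' h
  have hM' : (0 : ℝ) < M := Nat.cast_pos.2 hM
  have hn : (0 : ℝ) < n := Nat.cast_pos.2 i.pos
  rw [shift, shift, div_left_inj' (by positivity), add_left_inj, Nat.cast_inj] at h
  exact Fin.ext h

noncomputable def axis (hKd : K ≤ d) (k : Fin K) : EuclideanSpace ℝ (Fin d) :=
  EuclideanSpace.single (Fin.castLE hKd k) 1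

lemma orthonormal_axis (hKd : K ≤ d) : Orthonormal ℝ (axis hKd) :=
  EuclideanSpace.orthonormal_single.comp _ (Fin.castLE_injective hKd)

noncomputable def bluePt (hKd : K ≤ d) (M : ℕ) (k : Fin K) (t : Fin M) :
    EuclideanSpace ℝ (Fin d) :=
  (√(gridSq K M k t))⁻¹ • axis hKd k

variable [NeZero K]

lemma one_le_sumSq (τ : Fin K → Fin M) : 1 ≤ sumSq K M τ :=
  (one_le_gridSq 0 (τ 0)).trans (Finset.single_le_sum
    (fun k _ => zero_le_one.trans (one_le_gridSq k (τ k))) (Finset.mem_univ 0))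

/-- Distinct codes `τ` put the values of `sumSq` at least `M ^ (-K)` apart, and the red offsets
are too small to bridge that gap. -/
lemma marginValue_lt_of_lt {i i' : Fin n} {τ τ' : Fin K → Fin M}
    (h : (finFunctionFinEquiv τ : ℕ) < finFunctionFinEquiv τ') :
    marginValue K M n i' τ' < marginValue K M n i τ := by
  set ℓ' := shift K M n i' * √(gridSq K M 0 (τ' 0))
  have hM : (0 : ℝ) < M := Nat.cast_pos.2 (τ 0).pos
  have hMK1 : (1 : ℝ) ≤ (M : ℝ) ^ K := one_le_pow₀ (by exact_mod_cast (τ 0).pos)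
  have hℓ' : 0 ≤ ℓ' := mul_nonneg (shift_pos i' (τ 0)).le (Real.sqrt_nonneg _)
  have hℓ'_le := shift_mul_sqrt_gridSq_le (K := K) i' 0 (τ' 0)
  have hℓ'_le_one : ℓ' ≤ 1 :=
    hℓ'_le.trans ((div_le_one (by positivity)).2 (by nlinarith [(K.cast_nonneg : (0 : ℝ) ≤ K)]))
  have hS : 0 < sumSq K M τ := zero_lt_one.trans_le (one_le_sumSq τ)
  have hgap : sumSq K M τ + 1 / (M : ℝ) ^ K ≤ sumSq K M τ' := by
    rw [sumSq_eq, sumSq_eq, add_assoc, ← add_div, add_le_add_iff_left]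
    gcongr
    exact_mod_cast h
  have hsmall : (2 * ℓ' + ℓ' ^ 2) * sumSq K M τ < 1 / (M : ℝ) ^ K :=
    calc (2 * ℓ' + ℓ' ^ 2) * sumSq K M τ ≤ 3 * ℓ' * sumSq K M τ := by gcongr; nlinarith
      _ ≤ 3 * (1 / (3 * (K + 1) * (M : ℝ) ^ K)) * sumSq K M τ := by gcongr
      _ = sumSq K M τ / (K + 1) / (M : ℝ) ^ K := by field_simp
      _ < 1 / (M : ℝ) ^ K := by
        gcongr
        exact (div_lt_one (by positivity)).2 (sumSq_lt τ)
  exact div_sqrt_lt_div_sqrt (mul_nonneg (shift_pos i (τ 0)).le (Real.sqrt_nonneg _)) hℓ' hS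
    (by linarith)

lemma marginValue_injective :
    Function.Injective fun p : Fin n × (Fin K → Fin M) => marginValue K M n p.1 p.2 := by
  rintro ⟨i, τ⟩ ⟨i', τ'⟩ h
  simp only at h
  obtain rfl : τ = τ' := by
    by_contra hne
    have hcode : (finFunctionFinEquiv τ : ℕ) ≠ finFunctionFinEquiv τ' :=
      fun h' => hne (finFunctionFinEquiv.injective (Fin.ext h'))
    rcases hcode.lt_or_gt with hlt | hlt
    · exact (marginValue_lt_of_lt (i := i) (i' := i') hlt).ne' h
    · exact (marginValue_lt_of_lt (i := i') (i' := i) hlt).ne h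
  have hS : √(sumSq K M τ) ≠ 0 :=
    (Real.sqrt_pos.2 (zero_lt_one.trans_le (one_le_sumSq τ))).ne'
  have hν : √(gridSq K M 0 (τ 0)) ≠ 0 :=
    (Real.sqrt_pos.2 (zero_lt_one.trans_le (one_le_gridSq 0 (τ 0)))).ne'
  rw [marginValue, marginValue, div_left_inj' hS, add_right_inj, mul_left_inj' hν] at h
  rw [shift_injective (τ 0).pos h]


noncomputable def redPt (hKd : K ≤ d) (M : ℕ) (i : Fin n) :
    EuclideanSpace ℝ (Fin d) :=
  -shift K M n i • axis hKd 0

lemma isMar_redPt_bluePt (hKd : K ≤ d) (i : Fin n) (τ : Fin K → Fin M) :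
    IsMar d {redPt hKd M i} (Finset.univ.image fun k => bluePt hKd M k (τ k))
      (marginValue K M n i τ / 2) := by
  have hgrid : ∀ k, √(gridSq K M k (τ k)) ^ 2 = gridSq K M k (τ k) := fun k =>
    Real.sq_sqrt (zero_le_one.trans (one_le_gridSq k (τ k)))
  have hsum : ∑ k, √(gridSq K M k (τ k)) ^ 2 = sumSq K M τ := by
    simp only [hgrid, sumSq]
  have hM : (0 : ℝ) < M := Nat.cast_pos.2 (τ 0).pos
  have hMK1 : (1 : ℝ) ≤ (M : ℝ) ^ K := one_le_pow₀ (by exact_mod_cast (τ 0).pos)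
  set ℓ := shift K M n i * √(gridSq K M 0 (τ 0))
  have hℓ : 0 ≤ ℓ := mul_nonneg (shift_pos i (τ 0)).le (Real.sqrt_nonneg _)
  have hsmall : ℓ * sumSq K M τ ≤ (1 + ℓ) * gridSq K M 0 (τ 0) := by
    have h1 : ℓ * sumSq K M τ ≤ 1 / (3 * (K + 1) * (M : ℝ) ^ K) * (K + 1) :=
      mul_le_mul (shift_mul_sqrt_gridSq_le i 0 (τ 0)) (sumSq_lt τ).le
        (zero_le_one.trans (one_le_sumSq τ)) (by positivity)
    have h2 : 1 / (3 * (K + 1) * (M : ℝ) ^ K) * (K + 1) ≤ 1 := by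
      rw [div_mul_eq_mul_div, one_mul, div_le_one (by positivity)]
      nlinarith [(K.cast_nonneg : (0 : ℝ) ≤ K)]
    nlinarith [one_le_gridSq (K := K) 0 (τ 0)]
  have := isMar_neg_smul_of_orthonormal (orthonormal_axis hKd)
    (fun k => Real.sqrt_pos.2 (zero_lt_one.trans_le (one_le_gridSq k (τ k)))) 0
    (shift_pos i (τ 0)).le (by rwa [hsum, hgrid])
  rwa [hsum] at this


lemma exists_card_mul_pow_le_ncard (N : ℕ) (hKd : K ≤ d) (hKM : K * M ≤ N) :
    ∃ SR SB : Finset (EuclideanSpace ℝ (Fin d)), SR.card = n ∧ SB.card = N ∧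
      n * M ^ K ≤ {m : ℝ | ∃ VR ⊆ SR, ∃ VB ⊆ SB, VR.Nonempty ∧ VB.Nonempty ∧
        IsMar d VR VB m}.ncard := by
  have : Infinite (EuclideanSpace ℝ (Fin d)) :=
    Infinite.of_injective _ (smul_left_injective ℝ ((orthonormal_axis hKd).ne_zero 0))
  obtain ⟨SR, hSR, hSR_card⟩ := Infinite.exists_superset_card_eq
    (Finset.univ.image (redPt hKd M (n := n))) n (Finset.card_image_le.trans (by simp))
  obtain ⟨SB, hSB, hSB_card⟩ := Infinite.exists_superset_card_eq
    (Finset.univ.image fun kt : Fin K × Fin M => bluePt hKd M kt.1 kt.2) N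
    (Finset.card_image_le.trans (by simpa using hKM))
  refine ⟨SR, SB, hSR_card, hSB_card, ?_⟩
  have hrange : Set.range (fun p : Fin n × (Fin K → Fin M) => marginValue K M n p.1 p.2 / 2) ⊆
      {m : ℝ | ∃ VR ⊆ SR, ∃ VB ⊆ SB, VR.Nonempty ∧ VB.Nonempty ∧ IsMar d VR VB m} := by
    rintro _ ⟨⟨i, τ⟩, rfl⟩
    refine ⟨{redPt hKd M i}, ?_, Finset.univ.image fun k => bluePt hKd M k (τ k), ?_,
      Finset.singleton_nonempty _, Finset.univ_nonempty.image _, isMar_redPt_bluePt hKd i τ⟩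
    · exact Finset.singleton_subset_iff.2 (hSR (Finset.mem_image.2 ⟨i, Finset.mem_univ _, rfl⟩))
    · intro b hb
      obtain ⟨k, -, rfl⟩ := Finset.mem_image.1 hb
      exact hSB (Finset.mem_image.2 ⟨(k, τ k), Finset.mem_univ _, rfl⟩)
  have hinj : Function.Injective
      fun p : Fin n × (Fin K → Fin M) => marginValue K M n p.1 p.2 / 2 :=
    fun p q h => marginValue_injective ((div_left_inj' two_ne_zero).1 h)
  calc n * M ^ K = (Set.range _).ncard := by
        rw [Set.ncard_range_of_injective hinj]; simp
    _ ≤ _ := Set.ncard_le_ncard hrange (setOf_isMar_finite SR SB)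

end MarginGrid

/-- For every `d ≥ 1` there is `c > 0` such that for all `1 ≤ n ≤ N`
there are finite sets `S_R, S_B ⊆ ℝ^d` with `|S_R| = n` and `|S_B| = N` for which the
number of distinct values `Mar(V)`, taken over all strongly separable subsets
`V ⊆ S_R ∪ S_B` having at least one point of each color, is at least `c · n · N^d`. -/
theorem stmt_12 (d : ℕ) (hd : 1 ≤ d) :
    ∃ c : ℝ, 0 < c ∧ ∀ n N : ℕ, 1 ≤ n → n ≤ N →
      ∃ SR SB : Finset (EuclideanSpace ℝ (Fin d)),
        SR.card = n ∧ SB.card = N ∧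
        c * n * (N : ℝ) ^ d ≤
          ({m : ℝ | ∃ VR ⊆ SR, ∃ VB ⊆ SB, VR.Nonempty ∧ VB.Nonempty ∧
            IsMar d VR VB m}.ncard : ℝ) := by
  refine ⟨((2 * d : ℝ) ^ d)⁻¹, by positivity, fun n N hn hnN => ?_⟩
  have : NeZero (min d N) := ⟨by omega⟩
  obtain ⟨SR, SB, hSR, hSB, hcount⟩ := MarginGrid.exists_card_mul_pow_le_ncard (n := n)
    (M := N / min d N) N (min_le_left d N) (Nat.mul_div_le N _)
  refine ⟨SR, SB, hSR, hSB, ?_⟩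
  have hpow : (N : ℝ) ^ d ≤ (2 * d : ℝ) ^ d * ((N / min d N : ℕ) : ℝ) ^ min d N := by
    exact_mod_cast pow_le_two_mul_pow_mul_div_min_pow hd (hn.trans hnN)
  calc ((2 * d : ℝ) ^ d)⁻¹ * n * (N : ℝ) ^ d
      ≤ ((2 * d : ℝ) ^ d)⁻¹ * n * ((2 * d : ℝ) ^ d * ((N / min d N : ℕ) : ℝ) ^ min d N) := by
        gcongr
    _ = (n * (N / min d N) ^ min d N : ℕ) := by
        field_simp
        push_cast
        ring
    _ ≤ _ := by exact_mod_cast hcount
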